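/- arXiv:0803.0045 — 4 statements merged into one kernel-verified Lean document; each statement's English description precedes it below -/
import Mathlib

section
/- Let X₁ ⊆ X₂ ⊆ ⋯ be an ascending sequence of locally compact Hausdorff topological spaces such that each inclusion Xₙ → X_{n+1} is continuous. Then the union X = ⋃ₙ Xₙ, equipped with the direct limit topology, is a Hausdorff topological space. -/
/-!
Given `x ≠ y`, put both in a common level `n₀` and separate them there by disjoint compact sets.
Local compactness lets us thicken a disjoint pair of compact sets at level `n` into a disjoint pair
of compact sets at level `n + 1` whose interiors contain the images of the old ones. The unions
of these interiors over all levels are then disjoint, and open in the direct limit topology because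
every level meets them in a union of open sets.
-/

open TopologicalSpace Topology Set

theorem exists_isCompact_disjoint_subset_interior {β : Type*} [TopologicalSpace β] [T2Space β]
    [LocallyCompactSpace β] {K L : Set β} (hK : IsCompact K) (hL : IsCompact L)
    (hKL : Disjoint K L) :
    ∃ K' L' : Set β, IsCompact K' ∧ IsCompact L' ∧ Disjoint K' L' ∧
      K ⊆ interior K' ∧ L ⊆ interior L' := by
  obtain ⟨U, V, hU, hV, hKU, hLV, hUV⟩ := SeparatedNhds.of_isCompact_isCompact hK hL hKL
  obtain ⟨K', hK', hKK', hK'U⟩ := exists_compact_between hK hU hKU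
  obtain ⟨L', hL', hLL', hL'V⟩ := exists_compact_between hL hV hLV
  exact ⟨K', L', hK', hL', hUV.mono hK'U hL'V, hKK', hLL'⟩

theorem exists_disjoint_compact_chain {β : ℕ → Type*} [∀ n, TopologicalSpace (β n)]
    [∀ n, T2Space (β n)] [∀ n, LocallyCompactSpace (β n)] {f : ∀ n, β n → β (n + 1)}
    (hf : ∀ n, Continuous (f n)) (hf_inj : ∀ n, Function.Injective (f n))
    {K₀ L₀ : Set (β 0)} (hK₀ : IsCompact K₀) (hL₀ : IsCompact L₀) (hKL₀ : Disjoint K₀ L₀) :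
    ∃ K L : ∀ n, Set (β n), K 0 = K₀ ∧ L 0 = L₀ ∧ ∀ n, Disjoint (K n) (L n) ∧
      f n '' K n ⊆ interior (K (n + 1)) ∧ f n '' L n ⊆ interior (L (n + 1)) := by
  let Pair n := {p : Set (β n) × Set (β n) // IsCompact p.1 ∧ IsCompact p.2 ∧ Disjoint p.1 p.2}
  have hnext : ∀ n (p : Pair n), ∃ q : Pair (n + 1),
      f n '' p.1.1 ⊆ interior q.1.1 ∧ f n '' p.1.2 ⊆ interior q.1.2 := by
    rintro n ⟨⟨K, L⟩, hK, hL, hKL⟩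
    obtain ⟨K', L', hK', hL', hKL', hsub⟩ := exists_isCompact_disjoint_subset_interior
      (hK.image (hf n)) (hL.image (hf n)) ((disjoint_image_iff (hf_inj n)).2 hKL)
    exact ⟨⟨(K', L'), hK', hL', hKL'⟩, hsub⟩
  choose next hnext using hnext
  let chain : ∀ n, Pair n := fun n => Nat.rec ⟨(K₀, L₀), hK₀, hL₀, hKL₀⟩ next n
  exact ⟨fun n => (chain n).1.1, fun n => (chain n).1.2, rfl, rfl,
    fun n => ⟨(chain n).2.2.2, hnext n (chain n)⟩⟩

theorem disjoint_iUnion_of_monotone {α ι : Type*} [Preorder ι] [IsDirectedOrder ι]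
    {A B : ι → Set α} (hA : Monotone A) (hB : Monotone B) (hAB : ∀ i, Disjoint (A i) (B i)) :
    Disjoint (⋃ i, A i) (⋃ i, B i) := by
  refine disjoint_iUnion_left.2 fun i => disjoint_iUnion_right.2 fun j => ?_
  obtain ⟨k, hik, hjk⟩ := exists_ge_ge i j
  exact (hAB k).mono (hA hik) (hB hjk)

section DirectLimit

variable {X : Type*} {s : ℕ → Set X} [∀ n, TopologicalSpace (s n)] (hmono : Monotone s)
  (hincl : ∀ ⦃n m : ℕ⦄ (h : n ≤ m), Continuous (inclusion (hmono h)))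

include hincl in
theorem isOpen_iUnion_of_isOpen_preimage {W : ℕ → Set X} (hW : Monotone W) (n₀ : ℕ)
    (hW_open : ∀ k, IsOpen ((↑) ⁻¹' W k : Set (s (n₀ + k)))) :
    IsOpen[⨆ n, coinduced ((↑) : s n → X) inferInstance] (⋃ k, W k) := by
  simp only [isOpen_iSup_iff, isOpen_coinduced]
  intro n
  rw [← hW.iUnion_nat_add n, preimage_iUnion]
  exact isOpen_iUnion fun k => (hW_open (k + n)).preimage (hincl (by omega))

variable {n₀ : ℕ} {A : ∀ k, Set (s (n₀ + k))}
  (hA : ∀ k, inclusion (hmono (Nat.le_succ (n₀ + k))) '' A k ⊆ interior (A (k + 1)))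

include hA in
theorem monotone_image_interior : Monotone fun k => ((↑) '' interior (A k) : Set X) :=
  monotone_nat_of_le_succ fun k =>
    (image_mono interior_subset).trans (by simpa [image_image] using image_mono (hA k))

include hA in
theorem image_subset_iUnion_image_interior :
    ((↑) '' A 0 : Set X) ⊆ ⋃ k, (↑) '' interior (A k) := by
  rintro _ ⟨a, ha, rfl⟩
  exact mem_iUnion.2 ⟨1, _, hA 0 ⟨a, ha, rfl⟩, rfl⟩

include hincl hA in
theorem isOpen_iUnion_image_interior :
    IsOpen[⨆ n, coinduced ((↑) : s n → X) inferInstance] (⋃ k, (↑) '' interior (A k)) :=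
  isOpen_iUnion_of_isOpen_preimage hmono hincl (monotone_image_interior hmono hA) n₀ fun k => by
    rw [Subtype.val_injective.preimage_image]
    exact isOpen_interior

end DirectLimit

/-- an ascending union of locally compact Hausdorff spaces with
continuous inclusion maps is Hausdorff in the direct limit topology. -/
theorem direct_limit_of_locally_compact_spaces_is_hausdorff
    {X : Type*} (s : ℕ → Set X) (hmono : Monotone s)
    (hcover : ∀ x : X, ∃ n, x ∈ s n)
    (t : ∀ n, TopologicalSpace (s n))
    (hincl : ∀ ⦃n m : ℕ⦄ (h : n ≤ m),
      Continuous[t n, t m] (Set.inclusion (hmono h)))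
    (hT2 : ∀ n, @T2Space (s n) (t n))
    (hlc : ∀ n, @LocallyCompactSpace (s n) (t n)) :
    @T2Space X (⨆ n, (t n).coinduced (Subtype.val : s n → X)) := by
  let _ := t
  rw [t2Space_iff]
  intro x y hxy
  obtain ⟨n₁, hx⟩ := hcover x
  obtain ⟨n₂, hy⟩ := hcover y
  let n₀ := max n₁ n₂
  let x₀ : s n₀ := ⟨x, hmono (le_max_left _ _) hx⟩
  let y₀ : s n₀ := ⟨y, hmono (le_max_right _ _) hy⟩
  obtain ⟨K, L, hK₀, hL₀, hchain⟩ := exists_disjoint_compact_chain (β := fun k => s (n₀ + k))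
    (f := fun k => inclusion (hmono (Nat.le_succ (n₀ + k))))
    (fun k => hincl (Nat.le_succ (n₀ + k))) (fun _ => inclusion_injective _)
    (isCompact_singleton (x := x₀)) (isCompact_singleton (x := y₀))
    (disjoint_singleton.2 fun h => hxy (congrArg Subtype.val h))
  have hK k := (hchain k).2.1
  have hL k := (hchain k).2.2
  refine ⟨_, _, isOpen_iUnion_image_interior hmono hincl hK,
    isOpen_iUnion_image_interior hmono hincl hL,
    image_subset_iUnion_image_interior hmono hK ⟨x₀, hK₀ ▸ rfl, rfl⟩,
    image_subset_iUnion_image_interior hmono hL ⟨y₀, hL₀ ▸ rfl, rfl⟩,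
    disjoint_iUnion_of_monotone (monotone_image_interior hmono hK)
      (monotone_image_interior hmono hL) fun k => ?_⟩
  exact (disjoint_image_iff Subtype.val_injective).2
    ((hchain k).1.mono interior_subset interior_subset)
end

section
/- Let A ⊆ C([0,1], ℝ) be the unital normed algebra of all restrictions to [0,1] of real rational functions without poles in [0,1], with the supremum norm and pointwise operations. Then for v ∈ A, there exists a one-parameter group of the unit group A^× through v (i.e., a map γ : ℝ → A^× with γ(s+t) = γ(s)γ(t), γ(0) = 1, and derivative v at 0, given pointwise by γ(t)(x) = exp(t·v(x)) with γ(t) ∈ A for all t) only if v is a constant function. Concretely: if v ∈ A and e^{t v} ∈ A for all t ∈ ℝ (pointwise exponential on [0,1]), then v is constant. -/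
/-- `f : ℝ → ℝ` is (the restriction to `[0,1]` of) a rational function without
poles in `[0,1]`. -/
def IsRationalWithoutPolesOn01 (f : ℝ → ℝ) : Prop :=
  ∃ p q : Polynomial ℝ, (∀ x ∈ Set.Icc (0 : ℝ) 1, q.eval x ≠ 0) ∧
    ∀ x ∈ Set.Icc (0 : ℝ) 1, f x = p.eval x / q.eval x

/-!
If `exp (t * v)` is a rational function for every `t`, then `r = exp v` is a rational function
having an `n`-th root `exp (v / n)` for every `n ≥ 1`. Since the reduced numerator and
denominator of `s ^ n` are those of `s` raised to the `n`-th power, every `n` divides the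
degrees of the numerator and denominator of `r`; hence `r`, and with it `v`, is constant.
-/

open Polynomial

theorem associated_of_mul_eq_mul_of_isCoprime {R : Type*} [CommRing R] [IsDomain R]
    {a b c d : R} (hab : IsCoprime a b) (hcd : IsCoprime c d) (h : a * d = c * b) :
    Associated a c ∧ Associated b d := by
  refine ⟨associated_of_dvd_dvd ?_ ?_, associated_of_dvd_dvd ?_ ?_⟩
  · exact hab.dvd_of_dvd_mul_right (h ▸ dvd_mul_right a d)
  · exact hcd.dvd_of_dvd_mul_right (h ▸ dvd_mul_right c b)
  · exact hab.symm.dvd_of_dvd_mul_left (h.symm ▸ dvd_mul_left b c)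
  · exact hcd.symm.dvd_of_dvd_mul_left (h ▸ dvd_mul_left d a)

namespace RatFunc

variable {K : Type*} [Field K]

theorem associated_num_pow_and_denom_pow (s : RatFunc K) (n : ℕ) :
    Associated (s ^ n).num (s.num ^ n) ∧ Associated (s ^ n).denom (s.denom ^ n) := by
  refine associated_of_mul_eq_mul_of_isCoprime (s ^ n).isCoprime_num_denom
    (s.isCoprime_num_denom.pow) ?_
  rw [num_mul_eq_mul_denom_iff (pow_ne_zero n s.denom_ne_zero), map_pow, map_pow, ← div_pow,
    num_div_denom]

theorem natDegree_num_pow (s : RatFunc K) (n : ℕ) :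
    (s ^ n).num.natDegree = n * s.num.natDegree := by
  rw [natDegree_eq_natDegree
    (degree_eq_degree_of_associated (associated_num_pow_and_denom_pow s n).1), natDegree_pow]

theorem natDegree_denom_pow (s : RatFunc K) (n : ℕ) :
    (s ^ n).denom.natDegree = n * s.denom.natDegree := by
  rw [natDegree_eq_natDegree
    (degree_eq_degree_of_associated (associated_num_pow_and_denom_pow s n).2), natDegree_pow]

theorem exists_eq_C_of_forall_exists_pow_eq {r : RatFunc K}
    (hr : ∀ n : ℕ, 0 < n → ∃ s : RatFunc K, s ^ n = r) : ∃ c : K, r = C c := by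
  have eq_zero_of_forall_dvd {d : ℕ} (hd : ∀ n : ℕ, 0 < n → n ∣ d) : d = 0 :=
    Nat.eq_zero_of_dvd_of_lt (hd (d + 1) d.succ_pos) d.lt_succ_self
  rw [eq_C_iff]
  constructor <;> refine eq_zero_of_forall_dvd fun n hn => ?_ <;> obtain ⟨s, rfl⟩ := hr n hn
  · exact ⟨_, natDegree_num_pow s n⟩
  · exact ⟨_, natDegree_denom_pow s n⟩

theorem div_eq_div_iff_eqOn {S : Set K} (hS : S.Infinite) {p q p' q' : K[X]}
    (hq : ∀ x ∈ S, q.eval x ≠ 0) (hq' : ∀ x ∈ S, q'.eval x ≠ 0) :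
    algebraMap K[X] (RatFunc K) p / algebraMap K[X] (RatFunc K) q =
        algebraMap K[X] (RatFunc K) p' / algebraMap K[X] (RatFunc K) q' ↔
      ∀ x ∈ S, p.eval x / q.eval x = p'.eval x / q'.eval x := by
  obtain ⟨x₀, hx₀⟩ := hS.nonempty
  have ne_zero {f : K[X]} (hf : ∀ x ∈ S, f.eval x ≠ 0) : algebraMap K[X] (RatFunc K) f ≠ 0 :=
    algebraMap_ne_zero fun h => hf x₀ hx₀ (by rw [h, Polynomial.eval_zero])
  rw [div_eq_div_iff (ne_zero hq) (ne_zero hq'), ← map_mul, ← map_mul,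
    (algebraMap_injective K).eq_iff]
  constructor
  · intro h x hx
    rw [div_eq_div_iff (hq x hx) (hq' x hx), ← Polynomial.eval_mul, ← Polynomial.eval_mul, h]
  · intro h
    refine eq_of_infinite_eval_eq _ _ (hS.mono fun x hx => ?_)
    simpa only [Set.mem_ofPred_eq, Polynomial.eval_mul] using
      (div_eq_div_iff (hq x hx) (hq' x hx)).mp (h x hx)

end RatFunc

theorem one_parameter_group_in_rational_algebra_only_for_constants_general
    (v : ℝ → ℝ)
    (hexp : ∀ t : ℝ, IsRationalWithoutPolesOn01 fun x => Real.exp (t * v x)) :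
    ∃ c : ℝ, ∀ x ∈ Set.Icc (0 : ℝ) 1, v x = c := by
  choose p q hq hpq using hexp
  have hS : (Set.Icc (0 : ℝ) 1).Infinite := Set.Icc_infinite zero_lt_one
  let R (t : ℝ) : RatFunc ℝ :=
    algebraMap ℝ[X] (RatFunc ℝ) (p t) / algebraMap ℝ[X] (RatFunc ℝ) (q t)
  have hroot (n : ℕ) (hn : 0 < n) : ∃ s, s ^ n = R 1 := by
    have hqn : ∀ x ∈ Set.Icc (0 : ℝ) 1, (q (1 / n) ^ n).eval x ≠ 0 := fun x hx => by
      simpa only [eval_pow] using pow_ne_zero n (hq _ x hx)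
    refine ⟨R (1 / n), ?_⟩
    rw [div_pow, ← map_pow, ← map_pow, RatFunc.div_eq_div_iff_eqOn hS hqn (hq 1)]
    intro x hx
    rw [eval_pow, eval_pow, ← div_pow, ← hpq _ x hx, ← hpq 1 x hx, ← Real.exp_nat_mul]
    field_simp
  obtain ⟨c, hc⟩ := RatFunc.exists_eq_C_of_forall_exists_pow_eq hroot
  have hR : R 1 = algebraMap ℝ[X] (RatFunc ℝ) (C c) / algebraMap ℝ[X] (RatFunc ℝ) 1 := by
    rw [hc, map_one, div_one, RatFunc.algebraMap_C]
  have hexp_const := (RatFunc.div_eq_div_iff_eqOn hS (hq 1) (by simp)).mp hR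
  refine ⟨Real.log c, fun x hx => ?_⟩
  have hexp_eq : Real.exp (v x) = c := by
    simpa only [← hpq 1 x hx, one_mul, eval_C, eval_one, div_one] using hexp_const x hx
  rw [← hexp_eq, Real.log_exp]

/-- in the normed algebra `A ⊆ C([0,1],ℝ)` of restrictions of
rational functions without poles in `[0,1]`, a one-parameter group through
`v ∈ A` (given pointwise by `γ(t)(x) = exp(t·v(x))` with `γ(t) ∈ A` for all
`t`) exists only if `v` is constant: if `v ∈ A` and the pointwise exponential
`x ↦ exp(t·v(x))` lies in `A` for every `t ∈ ℝ`, then `v` is constant on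
`[0,1]`. -/
theorem one_parameter_group_in_rational_algebra_only_for_constants
    (v : ℝ → ℝ) (hv : IsRationalWithoutPolesOn01 v)
    (hexp : ∀ t : ℝ, IsRationalWithoutPolesOn01 fun x => Real.exp (t * v x)) :
    ∃ c : ℝ, ∀ x ∈ Set.Icc (0 : ℝ) 1, v x = c :=
  one_parameter_group_in_rational_algebra_only_for_constants_general v hexp
end

section
/- Let (Eₙ)_{n∈ℕ} and (Fₙ)_{n∈ℕ} be sequences of Hausdorff locally convex spaces, Uₙ ⊆ Eₙ be open subsets, and fₙ : Uₙ → Fₙ be continuous maps such that 0 ∈ Uₙ and fₙ(0) = 0 for all but finitely many n. Then ⊕ₙ Uₙ := (⊕ₙ Eₙ) ∩ ∏ₙ Uₙ is open in the locally convex direct sum ⊕ₙ Eₙ (with the box topology), and the map ⊕ₙ fₙ : ⊕ₙ Uₙ → ⊕ₙ Fₙ, (xₙ)ₙ ↦ (fₙ(xₙ))ₙ, is well-defined and continuous. -/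
/-!
In the box topology, the preimage of a box `∏ᵢ Vᵢ` under `∏ᵢ fᵢ` restricted to `∏ᵢ Uᵢ` is the
box `∏ᵢ (Uᵢ ∩ fᵢ⁻¹ Vᵢ)`, which is open because each `fᵢ` is continuous on the open set `Uᵢ`.
The image of a finitely supported sequence is finitely supported because `fₙ(xₙ) = fₙ(0) = 0`
for all but finitely many `n`.
-/

open TopologicalSpace Topology

section BoxTopology

variable {ι : Type*}

abbrev boxTopology (X : ι → Type*) [∀ i, TopologicalSpace (X i)] : TopologicalSpace (∀ i, X i) :=
  generateFrom {S | ∃ V : ∀ i, Set (X i), (∀ i, IsOpen (V i)) ∧ S = Set.univ.pi V}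

variable {X Y : ι → Type*} [∀ i, TopologicalSpace (X i)] [∀ i, TopologicalSpace (Y i)]

theorem isOpen_boxTopology_pi {V : ∀ i, Set (X i)} (hV : ∀ i, IsOpen (V i)) :
    IsOpen[boxTopology X] (Set.univ.pi V) :=
  isOpen_generateFrom_of_mem ⟨V, hV, rfl⟩

theorem continuous_boxTopology_piMap {Z : Type*} [TopologicalSpace Z]
    {U : ∀ i, Set (X i)} (hU : ∀ i, IsOpen (U i))
    {f : ∀ i, X i → Y i} (hf : ∀ i, ContinuousOn (f i) (U i))
    {p : Z → ∀ i, X i} (hp : Continuous[_, boxTopology X] p) (hpU : ∀ z i, p z i ∈ U i) :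
    Continuous[_, boxTopology Y] (fun z => Pi.map f (p z)) := by
  rw [boxTopology, continuous_generateFrom_iff]
  rintro S ⟨V, hV, rfl⟩
  have hpre : (fun z => Pi.map f (p z)) ⁻¹' Set.univ.pi V
      = p ⁻¹' Set.univ.pi (fun i => U i ∩ f i ⁻¹' V i) := by
    ext z
    simp [Set.mem_pi, hpU z]
  rw [hpre]
  exact @Continuous.isOpen_preimage _ _ _ (boxTopology X) _ hp _
    (isOpen_boxTopology_pi fun i => (hf i).isOpen_inter_preimage (hU i) (hV i))

end BoxTopology

theorem Set.Finite.setOf_piMap_ne_zero {ι : Type*} {X Y : ι → Type*} [∀ i, Zero (X i)]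
    [∀ i, Zero (Y i)] {f : ∀ i, X i → Y i} {g : ∀ i, X i}
    (hg : {i | g i ≠ 0}.Finite) (hf : {i | f i 0 ≠ 0}.Finite) :
    {i | f i (g i) ≠ 0}.Finite := by
  refine (hg.union hf).subset fun i hi => ?_
  rcases eq_or_ne (g i) 0 with h | h
  · exact Or.inr (by simpa [h] using hi)
  · exact Or.inl h

theorem direct_sum_of_continuous_maps_continuous_general
    {E F : ℕ → Type*}
    [∀ n, AddCommGroup (E n)] [∀ n, TopologicalSpace (E n)]
    [∀ n, AddCommGroup (F n)] [∀ n, TopologicalSpace (F n)]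
    (U : ∀ n, Set (E n)) (hUopen : ∀ n, IsOpen (U n))
    (f : ∀ n, E n → F n) (hfc : ∀ n, ContinuousOn (f n) (U n))
    (hae : {n | ¬((0 : E n) ∈ U n ∧ f n 0 = 0)}.Finite)
    -- the box topologies on the full products
    (tPE : TopologicalSpace (∀ n, E n))
    (htPE : tPE = TopologicalSpace.generateFrom
      {S | ∃ V : ∀ n, Set (E n), (∀ n, IsOpen (V n)) ∧ S = Set.univ.pi V})
    (tPF : TopologicalSpace (∀ n, F n))
    (htPF : tPF = TopologicalSpace.generateFrom
      {S | ∃ V : ∀ n, Set (F n), (∀ n, IsOpen (V n)) ∧ S = Set.univ.pi V}) :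
    -- `⊕ₙ Uₙ` is open in `⊕ₙ Eₙ`
    IsOpen[TopologicalSpace.induced
        (Subtype.val : {g : ∀ n, E n // {n | g n ≠ 0}.Finite} → ∀ n, E n) tPE]
      {g : {g : ∀ n, E n // {n | g n ≠ 0}.Finite} | ∀ n, g.1 n ∈ U n} ∧
    -- well-definedness of `⊕ₙ fₙ`
    (∀ g : {g : ∀ n, E n // {n | g n ≠ 0}.Finite}, (∀ n, g.1 n ∈ U n) →
      {n | f n (g.1 n) ≠ 0}.Finite) ∧
    -- continuity of `⊕ₙ fₙ`
    ∃ Φ : {g : {g : ∀ n, E n // {n | g n ≠ 0}.Finite} // ∀ n, g.1 n ∈ U n} →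
        {h : ∀ n, F n // {n | h n ≠ 0}.Finite},
      (∀ g n, (Φ g).1 n = f n (g.1.1 n)) ∧
      Continuous[TopologicalSpace.induced (fun g => g.1.1) tPE,
        TopologicalSpace.induced Subtype.val tPF] Φ := by
  change tPE = boxTopology E at htPE
  change tPF = boxTopology F at htPF
  subst htPE htPF
  have hf0 : {n | f n 0 ≠ 0}.Finite := hae.subset fun n hn h => hn h.2
  have hwd : ∀ g : {g : ∀ n, E n // {n | g n ≠ 0}.Finite}, (∀ n, g.1 n ∈ U n) →
      {n | f n (g.1 n) ≠ 0}.Finite := fun g _ => g.2.setOf_piMap_ne_zero hf0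
  refine ⟨⟨_, isOpen_boxTopology_pi hUopen, by ext g; simp [Set.mem_pi]⟩, hwd,
    fun g => ⟨Pi.map f g.1.1, hwd g.1 g.2⟩, fun _ _ => rfl, ?_⟩
  let _ : TopologicalSpace {g : {g : ∀ n, E n // {n | g n ≠ 0}.Finite} // ∀ n, g.1 n ∈ U n} :=
    induced (fun g => g.1.1) (boxTopology E)
  exact continuous_induced_rng.2 <|
    continuous_boxTopology_piMap hUopen hfc continuous_induced_dom fun g => g.2

/-- given sequences of Hausdorff locally convex spaces `(Eₙ)`,
`(Fₙ)`, open sets `Uₙ ⊆ Eₙ` and continuous maps `fₙ : Uₙ → Fₙ` with `0 ∈ Uₙ`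
and `fₙ(0) = 0` for all but finitely many `n`, the box `⊕ₙ Uₙ` is open in the
locally convex direct sum `⊕ₙ Eₙ` (box topology), and the map
`⊕ₙ fₙ : (xₙ)ₙ ↦ (fₙ(xₙ))ₙ` is a well-defined continuous map `⊕ₙ Uₙ → ⊕ₙ Fₙ`. -/
theorem direct_sum_of_continuous_maps_continuous
    {E F : ℕ → Type*}
    [∀ n, AddCommGroup (E n)] [∀ n, Module ℝ (E n)] [∀ n, TopologicalSpace (E n)]
    [∀ n, IsTopologicalAddGroup (E n)] [∀ n, ContinuousSMul ℝ (E n)]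
    [∀ n, T2Space (E n)] [∀ n, LocallyConvexSpace ℝ (E n)]
    [∀ n, AddCommGroup (F n)] [∀ n, Module ℝ (F n)] [∀ n, TopologicalSpace (F n)]
    [∀ n, IsTopologicalAddGroup (F n)] [∀ n, ContinuousSMul ℝ (F n)]
    [∀ n, T2Space (F n)] [∀ n, LocallyConvexSpace ℝ (F n)]
    (U : ∀ n, Set (E n)) (hUopen : ∀ n, IsOpen (U n))
    (f : ∀ n, E n → F n) (hfc : ∀ n, ContinuousOn (f n) (U n))
    (hae : {n | ¬((0 : E n) ∈ U n ∧ f n 0 = 0)}.Finite)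
    -- the box topologies on the full products
    (tPE : TopologicalSpace (∀ n, E n))
    (htPE : tPE = TopologicalSpace.generateFrom
      {S | ∃ V : ∀ n, Set (E n), (∀ n, IsOpen (V n)) ∧ S = Set.univ.pi V})
    (tPF : TopologicalSpace (∀ n, F n))
    (htPF : tPF = TopologicalSpace.generateFrom
      {S | ∃ V : ∀ n, Set (F n), (∀ n, IsOpen (V n)) ∧ S = Set.univ.pi V}) :
    -- `⊕ₙ Uₙ` is open in `⊕ₙ Eₙ`
    IsOpen[TopologicalSpace.induced
        (Subtype.val : {g : ∀ n, E n // {n | g n ≠ 0}.Finite} → ∀ n, E n) tPE]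
      {g : {g : ∀ n, E n // {n | g n ≠ 0}.Finite} | ∀ n, g.1 n ∈ U n} ∧
    -- well-definedness of `⊕ₙ fₙ`
    (∀ g : {g : ∀ n, E n // {n | g n ≠ 0}.Finite}, (∀ n, g.1 n ∈ U n) →
      {n | f n (g.1 n) ≠ 0}.Finite) ∧
    -- continuity of `⊕ₙ fₙ`
    ∃ Φ : {g : {g : ∀ n, E n // {n | g n ≠ 0}.Finite} // ∀ n, g.1 n ∈ U n} →
        {h : ∀ n, F n // {n | h n ≠ 0}.Finite},
      (∀ g n, (Φ g).1 n = f n (g.1.1 n)) ∧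
      Continuous[TopologicalSpace.induced (fun g => g.1.1) tPE,
        TopologicalSpace.induced Subtype.val tPF] Φ :=
  direct_sum_of_continuous_maps_continuous_general U hUopen f hfc hae tPE htPE tPF htPF
end

section
/- Let E be a Hausdorff locally convex space that is the locally convex direct limit of an ascending sequence of Hausdorff locally convex spaces E₁ ⊆ E₂ ⊆ ⋯ with continuous inclusions, and suppose E = ⋃ₙ Eₙ is compactly regular. Then the natural continuous linear map from the locally convex direct limit colim C([0,1], Eₙ) to C([0,1], E) (both spaces of continuous functions with the topology of uniform convergence) is a bijection; i.e., every continuous map [0,1] → E factors continuously through some Eₙ, and two such maps agree in the limit iff they agree in some Eₙ. -/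
open TopologicalSpace Topology

/-! A continuous path `γ : [0,1] → E` has compact image, which by compact regularity lies in
some `Eₙ` and is compact there. A continuous injection of a compact space into a Hausdorff
space is an embedding, so the `Eₙ`- and `E`-topologies agree on this image and `γ` is
continuous as a map into `Eₙ`. Injectivity holds because the inclusions are injective. -/

theorem IsCompact.continuous_of_continuous_comp {X Y Z : Type*} [TopologicalSpace X]
    [TopologicalSpace Y] [TopologicalSpace Z] [T2Space Y] {φ : X → Y} {K : Set X}
    (hK : IsCompact K) (hφ : ContinuousOn φ K) (hinj : Set.InjOn φ K) {f : Z → X}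
    (hfK : ∀ z, f z ∈ K) (hφf : Continuous (φ ∘ f)) : Continuous f := by
  have := isCompact_iff_compactSpace.mp hK
  have hemb : IsClosedEmbedding (K.domRestrict φ) :=
    hφ.domRestrict.isClosedEmbedding hinj.injective
  have hlift : Continuous (Set.codRestrict f K hfK) :=
    hemb.isEmbedding.continuous_iff.mpr hφf
  exact continuous_subtype_val.comp hlift

theorem continuous_maps_into_compactly_regular_direct_limit_factor_general
    {E : Type*} [AddCommGroup E] [Module ℝ E]
    (p : ℕ → Submodule ℝ E) (hmono : Monotone p)
    (t : ∀ n, TopologicalSpace (p n))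
    [tE : TopologicalSpace E] [T2Space E]
    (hincl : ∀ n, Continuous[t n, tE] (fun x : p n => (x : E)))
    -- compact regularity
    (hcompreg : ∀ K : Set E, IsCompact K → ∃ n, K ⊆ (p n : Set E) ∧
      @IsCompact (p n) (t n) ((fun x : p n => (x : E)) ⁻¹' K)) :
    -- surjectivity: every continuous `γ : [0,1] → E` factors continuously
    (∀ γ : Set.Icc (0 : ℝ) 1 → E, Continuous γ →
      ∃ (n : ℕ) (γ' : Set.Icc (0 : ℝ) 1 → p n),
        (∀ s, ((γ' s : p n) : E) = γ s) ∧ Continuous[inferInstance, t n] γ') ∧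
    -- injectivity: two maps agree in the limit iff they agree in some `E_m`
    ∀ (n : ℕ) (f g : Set.Icc (0 : ℝ) 1 → p n),
      Continuous[inferInstance, t n] f → Continuous[inferInstance, t n] g →
      ((∀ s, ((f s : p n) : E) = ((g s : p n) : E)) ↔
        ∃ (m : ℕ) (h : n ≤ m), ∀ s,
          Submodule.inclusion (hmono h) (f s) = Submodule.inclusion (hmono h) (g s)) := by
  refine ⟨fun γ hγ => ?_, fun n f g _ _ => ?_⟩
  · obtain ⟨n, hsub, hcpt⟩ := hcompreg (Set.range γ) (isCompact_range hγ)
    let := t n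
    refine ⟨n, fun s => ⟨γ s, hsub (Set.mem_range_self s)⟩, fun s => rfl, ?_⟩
    exact hcpt.continuous_of_continuous_comp (hincl n).continuousOn
      (Subtype.val_injective.injOn) (fun s => Set.mem_range_self s) hγ
  · constructor
    · exact fun h => ⟨n, le_rfl, fun s => Subtype.ext (h s)⟩
    · rintro ⟨m, _, h⟩ s
      exact congrArg (fun x : p m => (x : E)) (h s)

/-- let `E` be a Hausdorff locally convex space which is the
locally convex direct limit of an ascending sequence of Hausdorff locally
convex spaces `E₁ ⊆ E₂ ⊆ ⋯` with continuous inclusions, and suppose the union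
is compactly regular.  Then the natural map `colim C([0,1],Eₙ) → C([0,1],E)`
is a bijection: every continuous map `[0,1] → E` factors continuously through
some `Eₙ`, and two continuous maps into `Eₙ` agree in `E` iff they agree (after
inclusion) in some `E_m`, `m ≥ n`. -/
theorem continuous_maps_into_compactly_regular_direct_limit_factor
    {E : Type*} [AddCommGroup E] [Module ℝ E]
    (p : ℕ → Submodule ℝ E) (hmono : Monotone p) (hcover : ∀ x : E, ∃ n, x ∈ p n)
    (t : ∀ n, TopologicalSpace (p n))
    (htag : ∀ n, @IsTopologicalAddGroup (p n) (t n) _)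
    (hsm : ∀ n, @ContinuousSMul ℝ (p n) _ _ (t n))
    (hT2 : ∀ n, @T2Space (p n) (t n))
    (hlc : ∀ n, @LocallyConvexSpace ℝ (p n) _ _ _ _ (t n))
    [tE : TopologicalSpace E] [IsTopologicalAddGroup E] [ContinuousSMul ℝ E]
    [LocallyConvexSpace ℝ E] [T2Space E]
    (hincl : ∀ n, Continuous[t n, tE] (fun x : p n => (x : E)))
    -- `tE` is the locally convex direct limit topology (finest locally convex
    -- vector topology making all inclusions continuous)
    (hfinest : ∀ t' : TopologicalSpace E, @IsTopologicalAddGroup E t' _ →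
      @ContinuousSMul ℝ E _ _ t' → @LocallyConvexSpace ℝ E _ _ _ _ t' →
      (∀ n, Continuous[t n, t'] (fun x : p n => (x : E))) → t' ≤ tE)
    -- compact regularity
    (hcompreg : ∀ K : Set E, IsCompact K → ∃ n, K ⊆ (p n : Set E) ∧
      @IsCompact (p n) (t n) ((fun x : p n => (x : E)) ⁻¹' K)) :
    -- surjectivity: every continuous `γ : [0,1] → E` factors continuously
    (∀ γ : Set.Icc (0 : ℝ) 1 → E, Continuous γ →
      ∃ (n : ℕ) (γ' : Set.Icc (0 : ℝ) 1 → p n),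
        (∀ s, ((γ' s : p n) : E) = γ s) ∧ Continuous[inferInstance, t n] γ') ∧
    -- injectivity: two maps agree in the limit iff they agree in some `E_m`
    ∀ (n : ℕ) (f g : Set.Icc (0 : ℝ) 1 → p n),
      Continuous[inferInstance, t n] f → Continuous[inferInstance, t n] g →
      ((∀ s, ((f s : p n) : E) = ((g s : p n) : E)) ↔
        ∃ (m : ℕ) (h : n ≤ m), ∀ s,
          Submodule.inclusion (hmono h) (f s) = Submodule.inclusion (hmono h) (g s)) :=
  continuous_maps_into_compactly_regular_direct_limit_factor_general p hmono t (tE := tE) hincl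
    hcompreg
end
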